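/- arXiv:math/0105189 — 2 statements merged into one kernel-verified Lean document; each statement's English description precedes it below -/
import Mathlib

section
/- The Schur–Weierstrass polynomial S is weighted homogeneous of total weight g(g+1)/2 when the variable T_j is assigned the weight 2(g-j)+1 for j = 1, ..., g; that is, every monomial T_1^{m_1} * ... * T_g^{m_g} occurring in S with nonzero coefficient satisfies sum_{j=1}^{g} m_j * (2(g-j)+1) = g(g+1)/2. -/
/-!
The odd power sums `u_j` are algebraically independent. Their Jacobian matrix
`(∂u_j/∂x_k) = (x_k^{2(g-j)})` is a Vandermonde matrix in the squares `x_k^2`, so its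
determinant is nonzero. If `P(u) = 0`, the chain rule makes `((∂_j P)(u))_j` a kernel vector of it,
hence `(∂_j P)(u) = 0`; by induction on the degree every `∂_j P` vanishes, so in characteristic zero
`P` is constant, hence zero.

Since `u_j` is homogeneous of degree `2(g-j)+1`, substituting the `u_j` maps the
weighted-homogeneous components of `S` to the homogeneous components of `D_g`, injectively.
And `D_g` is homogeneous of degree `g(g+1)/2`: the entry in row `i`, column `j` has degree
`g - 2i + j + 1` (or vanishes), so every term of the determinant has degree
`∑_j (g + j + 1) - ∑_i 2i`.
-/

open MvPolynomial

/-- `U k = (-1)^k h_k`, the signed complete homogeneous symmetric polynomial in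
`ℚ[x_1, …, x_g]`, with `U k = 0` for `k < 0`. -/
noncomputable def SWU (g : ℕ) (k : ℤ) : MvPolynomial (Fin g) ℚ :=
  if 0 ≤ k then C ((-1 : ℚ) ^ k) * hsymm (Fin g) ℚ k.toNat else 0

/-- `D_g = det (U_{g - 2i + j + 1})_{1 ≤ i,j ≤ g}` (zero-based indices: the `(i,j)`
entry is `U_{g + j - 2i}`). -/
noncomputable def SWD (g : ℕ) : MvPolynomial (Fin g) ℚ :=
  (Matrix.of fun i j : Fin g => SWU g ((g : ℤ) + (j : ℤ) - 2 * (i : ℤ))).det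

/-- The weight `2(g-j)+1` attached to the (zero-based) index `j`. -/
def SWwt (g : ℕ) (j : Fin g) : ℕ := 2 * (g - 1 - (j : ℕ)) + 1

/-- `u_j = (1/(2(g-j)+1)) p_{2(g-j)+1}`. -/
noncomputable def SWu (g : ℕ) (j : Fin g) : MvPolynomial (Fin g) ℚ :=
  C (1 / ((SWwt g j : ℕ) : ℚ)) * psum (Fin g) ℚ (SWwt g j)

namespace MvPolynomial

variable {σ ι R : Type*}

section Homogeneity

variable [CommSemiring R]

theorem isHomogeneous_multiset_prod_X (s : Multiset σ) :
    (s.map (X : σ → MvPolynomial σ R)).prod.IsHomogeneous (Multiset.card s) := by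
  induction s using Multiset.induction_on with
  | empty => simpa using isHomogeneous_one σ R
  | cons a s ih =>
    rw [Multiset.map_cons, Multiset.prod_cons, Multiset.card_cons, add_comm]
    exact (isHomogeneous_X R a).mul ih

theorem hsymm_isHomogeneous [Fintype σ] [DecidableEq σ] (n : ℕ) : (hsymm σ R n).IsHomogeneous n :=
  IsHomogeneous.sum _ _ _ fun s _ => by simpa [s.2] using isHomogeneous_multiset_prod_X (R := R) s.1

theorem psum_isHomogeneous [Fintype σ] (n : ℕ) : (psum σ R n).IsHomogeneous n :=
  IsHomogeneous.sum _ _ _ fun i _ => isHomogeneous_X_pow i n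

theorem isWeightedHomogeneous_one_int_iff {φ : MvPolynomial σ R} {n : ℕ} :
    IsWeightedHomogeneous (1 : σ → ℤ) φ n ↔ φ.IsHomogeneous n := by
  have hweight (d : σ →₀ ℕ) : Finsupp.weight (1 : σ → ℤ) d = (Finsupp.weight 1 d : ℕ) := by
    simp [Finsupp.weight_apply, Finsupp.sum]
  simp only [IsHomogeneous, IsWeightedHomogeneous, hweight, Nat.cast_inj]

theorem IsWeightedHomogeneous.isHomogeneous_aeval {w : ι → ℕ} {f : ι → MvPolynomial σ R}
    {P : MvPolynomial ι R} {m : ℕ} (hP : IsWeightedHomogeneous w P m)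
    (hf : ∀ i, (f i).IsHomogeneous (w i)) : (aeval f P).IsHomogeneous m := by
  rw [aeval_def, eval₂_eq]
  refine IsHomogeneous.sum _ _ _ fun d hd => ?_
  have hprod : (∏ i ∈ d.support, f i ^ d i).IsHomogeneous m := by
    rw [← hP (mem_support_iff.mp hd), Finsupp.weight_apply, Finsupp.sum]
    refine IsHomogeneous.prod _ _ _ fun i _ => ?_
    rw [smul_eq_mul, mul_comm]
    exact (hf i).pow _
  simpa using (isHomogeneous_C σ (coeff d P)).mul hprod

theorem homogeneousComponent_aeval {w : ι → ℕ} {f : ι → MvPolynomial σ R}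
    (hf : ∀ i, (f i).IsHomogeneous (w i)) (P : MvPolynomial ι R) (n : ℕ) :
    homogeneousComponent n (aeval f P) = aeval f (weightedHomogeneousComponent w n P) := by
  classical
  induction P using MvPolynomial.induction_on' with
  | monomial d c =>
    have hd : IsWeightedHomogeneous w (monomial d c) (Finsupp.weight w d) :=
      isWeightedHomogeneous_monomial w d c rfl
    rw [homogeneousComponent_of_mem (hd.isHomogeneous_aeval hf),
      weightedHomogeneousComponent_of_mem hd, apply_ite (aeval f), map_zero]
  | add p q hp hq => simp only [map_add, hp, hq]

end Homogeneity

section CommRing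

variable [CommRing R]

theorem isWeightedHomogeneous_of_isHomogeneous_aeval {w : ι → ℕ} {f : ι → MvPolynomial σ R}
    (hind : AlgebraicIndependent R f) (hf : ∀ i, (f i).IsHomogeneous (w i))
    {P : MvPolynomial ι R} {n : ℕ} (hP : (aeval f P).IsHomogeneous n) :
    IsWeightedHomogeneous w P n := by
  have hcomp : weightedHomogeneousComponent w n P = P :=
    hind (by rw [← homogeneousComponent_aeval hf, homogeneousComponent_eq_self hP])
  exact hcomp ▸ weightedHomogeneousComponent_isWeightedHomogeneous n P

theorem isWeightedHomogeneous_det {M : Type*} [AddCommGroup M] [Fintype ι]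
    [DecidableEq ι] {w : σ → M} (A : Matrix ι ι (MvPolynomial σ R)) (a b : ι → M)
    (hA : ∀ i j, IsWeightedHomogeneous w (A i j) (a j - b i)) :
    IsWeightedHomogeneous w A.det (∑ j, a j - ∑ i, b i) := by
  rw [Matrix.det_apply]
  refine IsWeightedHomogeneous.sum _ _ _ fun τ _ => ?_
  have hprod := IsWeightedHomogeneous.prod Finset.univ (fun i => A (τ i) i)
    (fun i => a i - b (τ i)) fun i _ => hA _ _
  rw [Finset.sum_sub_distrib, Equiv.sum_comp τ b] at hprod
  rcases Int.units_eq_one_or (Equiv.Perm.sign τ) with h | h <;> simp [h, hprod, hprod.neg]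

end CommRing

section PDeriv

variable [CommSemiring R]

theorem totalDegree_pderiv_lt {i : σ} {p : MvPolynomial σ R} (h : pderiv i p ≠ 0) :
    (pderiv i p).totalDegree < p.totalDegree := by
  have hlt : ∀ u ∈ (pderiv i p).support, (u.sum fun _ e => e) < p.totalDegree := by
    intro u hu
    rw [mem_support_iff, coeff_pderiv] at hu
    have hle := le_totalDegree (mem_support_iff.mpr (left_ne_zero_of_mul hu))
    rw [Finsupp.sum_add_index' (fun _ => rfl) (fun _ _ _ => rfl),
      Finsupp.sum_single_index rfl] at hle
    omega
  obtain ⟨u, hu⟩ := ne_zero_iff.mp h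
  exact (Finset.sup_lt_iff ((Nat.zero_le _).trans_lt (hlt u (mem_support_iff.mpr hu)))).mpr hlt

theorem pderiv_aeval [Fintype ι] (f : ι → MvPolynomial σ R) (P : MvPolynomial ι R) (j : σ) :
    pderiv j (aeval f P) = ∑ i, aeval f (pderiv i P) * pderiv j (f i) := by
  classical
  induction P using MvPolynomial.induction_on with
  | C a => simp
  | add p q hp hq => simp only [map_add, hp, hq, ← Finset.sum_add_distrib, ← add_mul]
  | mul_X p k hp =>
    simp only [pderiv_mul, map_add, map_mul, aeval_X, add_mul, Finset.sum_add_distrib, hp,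
      Finset.sum_mul]
    have hX : ∑ i, aeval f p * aeval f (pderiv i (X k : MvPolynomial ι R)) * pderiv j (f i) =
        aeval f p * pderiv j (f k) := by
      rw [Fintype.sum_eq_single k fun i hik => by rw [pderiv_X_of_ne hik.symm, map_zero, mul_zero,
        zero_mul], pderiv_X_self, map_one, mul_one]
    rw [hX, Finset.sum_congr rfl fun i _ => mul_right_comm _ (f k) _]

end PDeriv

section CharZero

variable [CommRing R] [IsDomain R] [CharZero R]

theorem eq_C_of_forall_pderiv_eq_zero {p : MvPolynomial σ R} (h : ∀ i, pderiv i p = 0) :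
    p = C (coeff 0 p) := by
  classical
  ext d
  rw [coeff_C]
  split_ifs with hd
  · rw [hd]
  obtain ⟨i, hi⟩ := Finsupp.ne_iff.mp (Ne.symm hd)
  have hcoeff := coeff_pderiv (i := i) p (d - Finsupp.single i 1)
  rw [h i, coeff_zero, tsub_add_cancel_of_le
    (Finsupp.single_le_iff.mpr (Nat.one_le_iff_ne_zero.mpr hi))] at hcoeff
  exact (mul_eq_zero.mp hcoeff.symm).resolve_right (Nat.cast_add_one_ne_zero _)

theorem algebraicIndependent_of_det_jacobian_ne_zero [Fintype σ] [DecidableEq σ]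
    {f : σ → MvPolynomial σ R} (hf : (Matrix.of fun i j => pderiv j (f i)).det ≠ 0) :
    AlgebraicIndependent R f := by
  rw [algebraicIndependent_iff]
  intro P
  induction hP : P.totalDegree using Nat.strong_induction_on generalizing P with
  | _ n ih =>
    intro hzero
    have haeval_pderiv : (fun i => aeval f (pderiv i P)) = 0 := by
      refine Matrix.eq_zero_of_vecMul_eq_zero hf ?_
      funext j
      simp only [Matrix.vecMul, dotProduct, Matrix.of_apply, Pi.zero_apply]
      rw [← pderiv_aeval, hzero, map_zero]
    have hpderiv (i : σ) : pderiv i P = 0 := by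
      by_contra hne
      exact hne (ih _ (hP ▸ totalDegree_pderiv_lt hne) _ rfl (congrFun haeval_pderiv i))
    rw [eq_C_of_forall_pderiv_eq_zero hpderiv, aeval_C, algebraMap_eq,
      map_eq_zero_iff _ (C_injective σ R)] at hzero
    rw [eq_C_of_forall_pderiv_eq_zero hpderiv, hzero, C_0]

end CharZero

end MvPolynomial

theorem SWu_isHomogeneous (g : ℕ) (j : Fin g) : (SWu g j).IsHomogeneous (SWwt g j) :=
  (psum_isHomogeneous _).C_mul _

theorem pderiv_SWu (g : ℕ) (i j : Fin g) :
    pderiv j (SWu g i) = (X j ^ 2) ^ (i.rev : ℕ) := by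
  have hwt : ((SWwt g i : ℕ) : ℚ) ≠ 0 := Nat.cast_ne_zero.mpr (Nat.succ_ne_zero _)
  rw [SWu, pderiv_C_mul, psum, map_sum, Fintype.sum_eq_single j fun k hk => by
    rw [pderiv_pow, pderiv_X_of_ne hk, mul_zero], pderiv_pow, pderiv_X_self, mul_one,
    ← mul_assoc, ← map_natCast C, ← C_mul, one_div, inv_mul_cancel₀ hwt, C_1, one_mul, ← pow_mul,
    Fin.val_rev]
  congr 1
  simp only [SWwt]
  omega

theorem det_jacobian_SWu_ne_zero (g : ℕ) :
    (Matrix.of fun i j => pderiv j (SWu g i)).det ≠ 0 := by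
  have hjac : (Matrix.of fun i j => pderiv j (SWu g i)) =
      (Matrix.vandermonde fun k => (X k : MvPolynomial (Fin g) ℚ) ^ 2).transpose.submatrix
        Fin.revPerm id := by
    ext i j
    simp [pderiv_SWu]
  have hinj : Function.Injective fun k : Fin g => (X k : MvPolynomial (Fin g) ℚ) ^ 2 := by
    intro a b h
    simp only [X_pow_eq_monomial] at h
    exact Finsupp.single_left_injective two_ne_zero (monomial_left_injective one_ne_zero h)
  rw [hjac, Matrix.det_permute, Matrix.det_transpose]
  exact mul_ne_zero (by simp) (Matrix.det_vandermonde_ne_zero_iff.mpr hinj)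

theorem algebraicIndependent_SWu (g : ℕ) : AlgebraicIndependent ℚ (SWu g) :=
  algebraicIndependent_of_det_jacobian_ne_zero (det_jacobian_SWu_ne_zero g)

theorem SWU_isWeightedHomogeneous (g : ℕ) (k : ℤ) :
    IsWeightedHomogeneous (1 : Fin g → ℤ) (SWU g k) k := by
  rw [SWU]
  split_ifs with hk
  · have h := (isWeightedHomogeneous_one_int_iff.mpr (hsymm_isHomogeneous (σ := Fin g) (R := ℚ)
      k.toNat)).C_mul ((-1 : ℚ) ^ k)
    rwa [Int.toNat_of_nonneg hk] at h
  · exact isWeightedHomogeneous_zero _ _ _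

theorem SWD_isHomogeneous (g : ℕ) : (SWD g).IsHomogeneous (g * (g + 1) / 2) := by
  have hdeg : ∑ j : Fin g, ((g : ℤ) + j) - ∑ i : Fin g, 2 * (i : ℤ) = (g * (g + 1) / 2 : ℕ) := by
    have hgauss := Finset.sum_range_id_mul_two (g + 1)
    rw [Finset.sum_range_succ, ← Fin.sum_univ_eq_sum_range, Nat.add_sub_cancel] at hgauss
    rw [Nat.div_eq_of_eq_mul_left two_pos (by rw [hgauss, mul_comm])]
    have hgaussZ := congrArg (Nat.cast : ℕ → ℤ) hgauss
    push_cast at hgaussZ ⊢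
    simp only [Finset.sum_add_distrib, ← Finset.mul_sum, Finset.sum_const, Finset.card_univ,
      Fintype.card_fin, nsmul_eq_mul]
    linear_combination (-1 : ℤ) * hgaussZ
  rw [← isWeightedHomogeneous_one_int_iff, ← hdeg]
  exact isWeightedHomogeneous_det _ (fun j : Fin g => (g : ℤ) + j) (fun i : Fin g => 2 * (i : ℤ))
    fun i j => SWU_isWeightedHomogeneous g _

theorem schur_weierstrass_weighted_homogeneous_general (g : ℕ)
    (S : MvPolynomial (Fin g) ℚ) (hS : aeval (SWu g) S = SWD g)
    (d : Fin g →₀ ℕ) (hd : d ∈ S.support) :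
    ∑ j : Fin g, d j * SWwt g j = g * (g + 1) / 2 := by
  have hS_hom : IsWeightedHomogeneous (SWwt g) S (g * (g + 1) / 2) :=
    isWeightedHomogeneous_of_isHomogeneous_aeval (algebraicIndependent_SWu g) (SWu_isHomogeneous g)
      (hS ▸ SWD_isHomogeneous g)
  rw [← hS_hom (mem_support_iff.mp hd), Finsupp.weight_eq_sum]
  simp only [smul_eq_mul]

/-- The Schur–Weierstrass polynomial `S` is weighted homogeneous of total weight
`g(g+1)/2` when `T_j` is assigned the weight `2(g-j)+1`: every monomial
`T_1^{m_1} ⋯ T_g^{m_g}` occurring in `S` satisfies `∑_j m_j (2(g-j)+1) = g(g+1)/2`. -/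
theorem schur_weierstrass_weighted_homogeneous (g : ℕ) (hg : 0 < g)
    (S : MvPolynomial (Fin g) ℚ) (hS : aeval (SWu g) S = SWD g)
    (d : Fin g →₀ ℕ) (hd : d ∈ S.support) :
    ∑ j : Fin g, d j * SWwt g j = g * (g + 1) / 2 :=
  schur_weierstrass_weighted_homogeneous_general g S hS d hd
end

section
/- Let N >= 1 and let r, s >= 0 be integers with r + s = N and s <= r + 2. Let f : R -> R be infinitely differentiable and let x : R -> R be infinitely differentiable satisfying x'(u) = 2 * f(x(u)) for all real u. Fix a real number u_0. Let M be the N x N real matrix whose i-th row (1 <= i <= N) is: for 1 <= k <= r, the k-th column entry is the i-th derivative of the function u |-> x(u)^k evaluated at u_0, and for 0 <= k <= s-1, the (r+1+k)-th column entry is the i-th derivative of the function u |-> f(x(u)) * x(u)^k evaluated at u_0. Then det M = (-1)^{s(s-1)/2} * (1! * 2! * ... * N!) * (2 * f(x(u_0)))^{N(N+1)/2} * det( f^{(r-s+a+b)}(x(u_0)) / (r-s+a+b)! )_{1 <= a, b <= s}, where f^{(m)} denotes the m-th derivative of f. -/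
open Matrix Finset Equiv

open scoped ContDiff

section CantorBrioschiHelpers

private lemma smooth_iteratedDeriv' {g : ℝ → ℝ} (hg : ContDiff ℝ ∞ g) (n : ℕ) :
    ContDiff ℝ ∞ (iteratedDeriv n g) := by
  rw [iteratedDeriv_eq_iterate]; exact hg.iterate_deriv n

private lemma smoothR_dAt {g : ℝ → ℝ} (hg : ContDiff ℝ ∞ g) (t : ℝ) : DifferentiableAt ℝ g t :=
  (hg.differentiable (by simp)).differentiableAt

private lemma smooth_deriv' {g : ℝ → ℝ} (hg : ContDiff ℝ ∞ g) : ContDiff ℝ ∞ (deriv g) :=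
  (contDiff_infty_iff_deriv.mp hg).2

private lemma iteratedDeriv_mul'' {f g : ℝ → ℝ} (hf : ContDiff ℝ ∞ f) (hg : ContDiff ℝ ∞ g)
    (n : ℕ) :
    iteratedDeriv n (fun t => f t * g t) = fun t =>
      ∑ k ∈ range (n + 1),
        (n.choose k : ℝ) * iteratedDeriv k f t * iteratedDeriv (n - k) g t := by
  induction n with
  | zero => simp
  | succ n ih =>
    funext t
    rw [iteratedDeriv_succ, ih]
    have hd : ∀ k : ℕ, ∀ t : ℝ,
        deriv (fun t => (n.choose k : ℝ) * iteratedDeriv k f t * iteratedDeriv (n - k) g t) t =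
          (n.choose k : ℝ) * iteratedDeriv (k+1) f t * iteratedDeriv (n - k) g t +
          (n.choose k : ℝ) * iteratedDeriv k f t * iteratedDeriv (n - k + 1) g t := by
      intro k t
      have h1 : DifferentiableAt ℝ (fun t => (n.choose k : ℝ) * iteratedDeriv k f t) t :=
        ((smooth_iteratedDeriv' hf k).const_smul (n.choose k : ℝ)).differentiable
          (by simp) |>.differentiableAt
      have h2 := smoothR_dAt (smooth_iteratedDeriv' hg (n - k)) t
      rw [show (fun t => (n.choose k : ℝ) * iteratedDeriv k f t * iteratedDeriv (n - k) g t) =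
        (fun t => ((n.choose k : ℝ) * iteratedDeriv k f t) * iteratedDeriv (n - k) g t) from rfl,
        deriv_fun_mul h1 h2, deriv_const_mul _ (smoothR_dAt (smooth_iteratedDeriv' hf k) t),
        ← iteratedDeriv_succ, ← iteratedDeriv_succ]
    rw [deriv_fun_sum (fun k _ => by
      have h1 : DifferentiableAt ℝ (fun t => (n.choose k : ℝ) * iteratedDeriv k f t) t :=
        ((smooth_iteratedDeriv' hf k).const_smul (n.choose k : ℝ)).differentiable
          (by simp) |>.differentiableAt
      exact h1.mul (smoothR_dAt (smooth_iteratedDeriv' hg (n - k)) t))]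
    simp_rw [hd]
    rw [Finset.sum_add_distrib]
    have e2 : ∑ k ∈ range (n + 1),
        (n.choose k : ℝ) * iteratedDeriv k f t * iteratedDeriv (n - k + 1) g t
        = ∑ k ∈ range (n + 1), (n.choose k : ℝ) * iteratedDeriv k f t *
            iteratedDeriv (n + 1 - k) g t := by
      refine Finset.sum_congr rfl fun k hk => ?_
      rw [Finset.mem_range] at hk
      congr 2
      omega
    rw [e2]
    rw [Finset.sum_range_succ' (fun k => ((n+1).choose k : ℝ) * iteratedDeriv k f t *
      iteratedDeriv (n + 1 - k) g t) (n+1)]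
    simp only [Nat.choose_succ_succ, Nat.succ_sub_succ, Nat.choose_zero_right, Nat.cast_add,
      Nat.cast_one, Nat.sub_zero]
    rw [show ∑ k ∈ range (n + 1), ((n.choose k : ℝ) + (n.choose (k+1) : ℝ)) *
          iteratedDeriv (k+1) f t * iteratedDeriv (n - k) g t
        = ∑ k ∈ range (n + 1), ((n.choose k : ℝ) * iteratedDeriv (k+1) f t *
            iteratedDeriv (n - k) g t)
          + ∑ k ∈ range (n + 1), ((n.choose (k+1) : ℝ) * iteratedDeriv (k+1) f t *
            iteratedDeriv (n - k) g t) from by rw [← Finset.sum_add_distrib]; congr 1; ext k; ring]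
    have e3 : ∑ k ∈ range (n + 1), ((n.choose (k+1) : ℝ) * iteratedDeriv (k+1) f t *
        iteratedDeriv (n - k) g t)
        = (∑ k ∈ range (n + 1), (n.choose k : ℝ) * iteratedDeriv k f t *
            iteratedDeriv (n + 1 - k) g t)
          - iteratedDeriv 0 f t * iteratedDeriv (n + 1) g t := by
      rw [Finset.sum_range_succ' (fun k => (n.choose k : ℝ) * iteratedDeriv k f t *
        iteratedDeriv (n + 1 - k) g t) n]
      rw [Finset.sum_range_succ]
      simp only [Nat.choose_succ_self, Nat.succ_sub_succ, Nat.cast_zero, Nat.choose_zero_right,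
        Nat.cast_one, Nat.sub_zero]
      ring
    rw [e3]
    ring

private lemma iteratedDeriv_sub_pow' (c : ℝ) (p n : ℕ) :
    iteratedDeriv n (fun t : ℝ => (t - c) ^ p) =
      fun t => (p.descFactorial n : ℝ) * (t - c) ^ (p - n) := by
  induction n with
  | zero => simp
  | succ n ih =>
    funext t
    rw [iteratedDeriv_succ, ih]
    have h : HasDerivAt (fun t : ℝ => (t - c) ^ (p - n))
        (((p - n : ℕ) : ℝ) * (t - c) ^ (p - n - 1) * 1) t :=
      ((hasDerivAt_id t).sub_const c).pow (p - n)
    rw [deriv_const_mul _ h.differentiableAt, h.deriv]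
    rw [Nat.descFactorial_succ, Nat.sub_sub]
    push_cast
    ring

private lemma iteratedDeriv_sub_pow_self' (c : ℝ) (p n : ℕ) :
    iteratedDeriv n (fun t : ℝ => (t - c) ^ p) c = if n = p then (p.factorial : ℝ) else 0 := by
  rw [iteratedDeriv_sub_pow']
  rcases eq_or_ne n p with rfl | h
  · simp [Nat.descFactorial_self]
  · rcases lt_or_gt_of_ne h with hlt | hgt
    · simp [if_neg h, zero_pow (Nat.sub_ne_zero_of_lt hlt), sub_self]
    · simp [if_neg h, Nat.descFactorial_eq_zero_iff_lt.mpr hgt]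

private lemma smooth_sub_pow (c : ℝ) (p : ℕ) : ContDiff ℝ ∞ (fun t : ℝ => (t - c) ^ p) :=
  (contDiff_id.sub contDiff_const).pow p

private lemma iteratedDeriv_mul_pow_self {f : ℝ → ℝ} (hf : ContDiff ℝ ∞ f) (c : ℝ) (k n : ℕ)
    (hk : k ≤ n) :
    iteratedDeriv n (fun t => f t * (t - c) ^ k) c =
      (n.choose k : ℝ) * (k.factorial : ℝ) * iteratedDeriv (n - k) f c := by
  simp only [iteratedDeriv_mul'' hf (smooth_sub_pow c k)]
  rw [Finset.sum_eq_single (n - k)]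
  · rw [iteratedDeriv_sub_pow_self']
    rw [if_pos (by omega), Nat.choose_symm hk]
    ring
  · intro j hj hne
    rw [Finset.mem_range] at hj
    rw [iteratedDeriv_sub_pow_self', if_neg (by omega)]
    ring
  · intro h
    exact absurd (Finset.mem_range.mpr (by omega)) h

private lemma iteratedDeriv_fin_sum {n : ℕ} {F : Fin n → ℝ → ℝ} (h : ∀ j, ContDiff ℝ ∞ (F j))
    (m : ℕ) (t : ℝ) :
    iteratedDeriv m (fun z => ∑ j, F j z) t = ∑ j, iteratedDeriv m (F j) t := by
  simp only [iteratedDeriv_eq_iteratedFDeriv]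
  rw [show (fun z => ∑ j, F j z) = (∑ j, F j ·) from rfl,
    iteratedFDeriv_sum (fun j _ => (h j).of_le (by exact_mod_cast le_top))]
  simp

private lemma iteratedDeriv_cmul {g : ℝ → ℝ} (hg : ContDiff ℝ ∞ g) (c : ℝ) (n : ℕ) (t : ℝ) :
    iteratedDeriv n (fun z => c * g z) t = c * iteratedDeriv n g t := by
  rw [← iteratedDerivWithin_univ, ← iteratedDerivWithin_univ]
  exact iteratedDerivWithin_const_mul (Set.mem_univ t) uniqueDiffOn_univ c
    ((hg.of_le (by exact_mod_cast le_top)).contDiffWithinAt)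

private lemma iteratedDeriv_add_const' {g : ℝ → ℝ} (n : ℕ) (hn : 0 < n) (c : ℝ) (t : ℝ) :
    iteratedDeriv n (fun z => g z + c) t = iteratedDeriv n g t := by
  have h : (fun z => g z + c) = (fun z => c + g z) := funext fun z => add_comm _ _
  rw [h, ← iteratedDerivWithin_univ, ← iteratedDerivWithin_univ]
  exact iteratedDerivWithin_const_add hn c

private lemma sign_revPerm' : ∀ s : ℕ,
    Perm.sign (Fin.revPerm : Perm (Fin s)) = (-1 : ℤˣ) ^ (s * (s - 1) / 2)
  | 0 => by
    have : (Fin.revPerm : Perm (Fin 0)) = 1 := Subsingleton.elim _ _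
    simp [this]
  | (s + 1) => by
    have key : (Fin.revPerm : Perm (Fin (s + 1)))
        = finRotate (s + 1) *
          ((finSuccEquivLast (n := s)).symm.permCongr
            ((Fin.revPerm : Perm (Fin s)).optionCongr)) := by
      ext i
      refine Fin.lastCases ?_ (fun j => ?_) i
      · simp [Equiv.permCongr_apply]
      · simp only [Fin.revPerm_apply, Perm.mul_apply, Equiv.permCongr_apply, Equiv.symm_symm,
          finSuccEquivLast_castSucc, Equiv.optionCongr_apply, Option.map_some,
          finSuccEquivLast_symm_some, Fin.revPerm_apply]
        rw [finRotate_succ_apply]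
        have hj : (j : ℕ) < s := j.isLt
        have h1 : (Fin.castSucc (Fin.rev j)) ≠ Fin.last s := by
          simp only [ne_eq, Fin.ext_iff, Fin.coe_castSucc, Fin.val_rev, Fin.val_last]
          omega
        rw [Fin.val_add_one_of_lt (Fin.lt_last_iff_ne_last.mpr h1)]
        simp only [Fin.coe_castSucc, Fin.val_rev, Fin.val_last]
        omega
    rw [key, _root_.map_mul, sign_finRotate, Perm.sign_permCongr, Equiv.optionCongr_sign,
      sign_revPerm' s]
    rw [← pow_add]
    congr 1
    have h2 : Even (s * (s - 1)) := by
      rcases s with _ | k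
      · simp
      · simpa [Nat.mul_comm] using Nat.even_mul_succ_self k
    have h3 : Even ((s + 1) * s) := by simpa [Nat.mul_comm] using Nat.even_mul_succ_self s
    have e2 := Nat.div_mul_cancel h2.two_dvd
    have e3 := Nat.div_mul_cancel h3.two_dvd
    have e4 : (s + 1) * s = s * (s - 1) + 2 * s := by
      cases s with
      | zero => rfl
      | succ k => simp only [Nat.succ_sub_one]; ring
    simp only [Nat.add_sub_cancel]
    omega

private noncomputable def cbAux (f x : ℝ → ℝ) : ℕ → ℕ → ℝ → ℝ
  | 0, 0 => fun _ => 1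
  | 0, _ + 1 => fun _ => 0
  | i + 1, 0 => deriv (cbAux f x i 0)
  | i + 1, m + 1 => fun u => deriv (cbAux f x i (m + 1)) u + cbAux f x i m u * (2 * f (x u))

section cb
variable {f x : ℝ → ℝ} (hf : ContDiff ℝ ∞ f) (hx : ContDiff ℝ ∞ x)

include hf hx in
private lemma cbAux_smooth : ∀ i m : ℕ, ContDiff ℝ ∞ (cbAux f x i m)
  | 0, 0 => contDiff_const
  | 0, _ + 1 => contDiff_const
  | i + 1, 0 => smooth_deriv' (cbAux_smooth i 0)
  | i + 1, m + 1 => by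
    show ContDiff ℝ ∞ fun u => deriv (cbAux f x i (m + 1)) u + cbAux f x i m u * (2 * f (x u))
    exact (smooth_deriv' (cbAux_smooth i (m+1))).add
      ((cbAux_smooth i m).mul ((contDiff_const (c := (2:ℝ))).mul (hf.comp hx)))

private lemma cbAux_eq_zero (f x : ℝ → ℝ) : ∀ i m : ℕ, i < m → cbAux f x i m = fun _ => 0
  | 0, m + 1, _ => rfl
  | i + 1, m + 1, h => by
    show (fun u => deriv (cbAux f x i (m + 1)) u + cbAux f x i m u * (2 * f (x u))) = fun _ => 0
    rw [cbAux_eq_zero f x i (m + 1) (by omega), cbAux_eq_zero f x i m (by omega)]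
    funext u
    simp

private lemma cbAux_zero_right (f x : ℝ → ℝ) : ∀ i : ℕ, cbAux f x (i + 1) 0 = fun _ => 0
  | 0 => by
    show deriv (fun _ => (1:ℝ)) = fun _ => 0
    funext u; simp
  | i + 1 => by
    show deriv (cbAux f x (i + 1) 0) = fun _ => 0
    rw [cbAux_zero_right f x i]
    funext u; simp

private lemma cbAux_diag (f x : ℝ → ℝ) : ∀ i : ℕ, ∀ u, cbAux f x i i u = (2 * f (x u)) ^ i
  | 0, u => by simp [cbAux]
  | i + 1, u => by
    show deriv (cbAux f x i (i + 1)) u + cbAux f x i i u * (2 * f (x u)) = _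
    rw [cbAux_eq_zero f x i (i + 1) (by omega), cbAux_diag f x i u]
    simp [pow_succ]

include hf hx in
private lemma cbAux_chain (hxf : ∀ u, deriv x u = 2 * f (x u)) (g : ℝ → ℝ)
    (hg : ContDiff ℝ ∞ g) :
    ∀ i : ℕ, iteratedDeriv i (fun v => g (x v)) = fun u =>
      ∑ m ∈ range (i + 1), cbAux f x i m u * iteratedDeriv m g (x u)
  | 0 => by
    funext u
    simp [cbAux]
  | i + 1 => by
    funext u
    rw [iteratedDeriv_succ, cbAux_chain hxf g hg i]
    have hcomp : ∀ m : ℕ, ∀ u : ℝ, DifferentiableAt ℝ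
        (fun u => iteratedDeriv m g (x u)) u := fun m u =>
      (smoothR_dAt (smooth_iteratedDeriv' hg m) (x u)).comp u (smoothR_dAt hx u)
    have hdiff : ∀ m : ℕ, ∀ u : ℝ, DifferentiableAt ℝ
        (fun u => cbAux f x i m u * iteratedDeriv m g (x u)) u := fun m u =>
      (smoothR_dAt (cbAux_smooth hf hx i m) u).mul (hcomp m u)
    rw [deriv_fun_sum (fun m _ => hdiff m u)]
    have key : ∀ m : ℕ,
        deriv (fun u => cbAux f x i m u * iteratedDeriv m g (x u)) u =
          deriv (cbAux f x i m) u * iteratedDeriv m g (x u) +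
            cbAux f x i m u * (iteratedDeriv (m + 1) g (x u) * (2 * f (x u))) := by
      intro m
      rw [deriv_fun_mul (smoothR_dAt (cbAux_smooth hf hx i m) u) (hcomp m u)]
      congr 1
      rw [show (fun u => iteratedDeriv m g (x u)) = (iteratedDeriv m g) ∘ x from rfl,
        deriv_comp u (smoothR_dAt (smooth_iteratedDeriv' hg m) (x u)) (smoothR_dAt hx u),
        hxf u, ← iteratedDeriv_succ]
    simp_rw [key]
    rw [Finset.sum_add_distrib]
    rw [Finset.sum_range_succ' (fun m => cbAux f x (i+1) m u * iteratedDeriv m g (x u)) (i+1)]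
    have h0 : cbAux f x (i + 1) 0 u * iteratedDeriv 0 g (x u)
        = deriv (cbAux f x i 0) u * iteratedDeriv 0 g (x u) := rfl
    have hsucc : ∀ m : ℕ, cbAux f x (i + 1) (m + 1) u
        = deriv (cbAux f x i (m + 1)) u + cbAux f x i m u * (2 * f (x u)) := fun m => rfl
    simp_rw [hsucc, h0]
    rw [Finset.sum_range_succ' (fun m => deriv (cbAux f x i m) u * iteratedDeriv m g (x u)) i]
    have hz : deriv (cbAux f x i (i + 1)) u = 0 := by
      rw [cbAux_eq_zero f x i (i + 1) (by omega)]
      simp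
    rw [Finset.sum_range_succ
      (fun m => (deriv (cbAux f x i (m + 1)) u + cbAux f x i m u * (2 * f (x u))) *
        iteratedDeriv (m + 1) g (x u)) i]
    rw [Finset.sum_range_succ
      (fun m => cbAux f x i m u * (iteratedDeriv (m + 1) g (x u) * (2 * f (x u)))) i]
    rw [hz]
    simp only [add_mul, zero_mul, zero_add, Finset.sum_add_distrib]
    have hcomm : ∑ m ∈ range i, cbAux f x i m u * (2 * f (x u)) * iteratedDeriv (m + 1) g (x u)
        = ∑ m ∈ range i, cbAux f x i m u * (iteratedDeriv (m + 1) g (x u) * (2 * f (x u))) :=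
      Finset.sum_congr rfl (fun m _ => by ring)
    rw [hcomm]
    ring
end cb

end CantorBrioschiHelpers

/-- The Cantor–Brioschi identity: if `x' (u) = 2 f(x(u))` for all `u`, then the
Kiepert-type determinant of the derivatives (with respect to `u`) of
`x^k` (`1 ≤ k ≤ r`) and `f(x)·x^k` (`0 ≤ k ≤ s-1`) at `u₀` equals
`(-1)^{s(s-1)/2} · 1!2!⋯N! · (2f(x(u₀)))^{N(N+1)/2} ·
  det ( f^{(r-s+a+b)}(x(u₀))/(r-s+a+b)! )_{1 ≤ a,b ≤ s}`. -/
theorem det_kiepert_eq_cantor_brioschi (N r s : ℕ) (hN : 1 ≤ N) (hrs : r + s = N)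
    (hs : s ≤ r + 2) (f : ℝ → ℝ) (hf : ContDiff ℝ (⊤ : ℕ∞) f)
    (x : ℝ → ℝ) (hx : ContDiff ℝ (⊤ : ℕ∞) x)
    (hxf : ∀ u : ℝ, deriv x u = 2 * f (x u)) (u₀ : ℝ) :
    (Matrix.of fun i j : Fin N =>
        if (j : ℕ) < r then
          iteratedDeriv ((i : ℕ) + 1) (fun u : ℝ => x u ^ ((j : ℕ) + 1)) u₀
        else
          iteratedDeriv ((i : ℕ) + 1) (fun u : ℝ => f (x u) * x u ^ ((j : ℕ) - r)) u₀).det =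
      (-1 : ℝ) ^ (s * (s - 1) / 2) *
        (∏ k ∈ Finset.range N, ((k + 1).factorial : ℝ)) *
        (2 * f (x u₀)) ^ (N * (N + 1) / 2) *
        (Matrix.of fun a b : Fin s =>
          iteratedDeriv (r + 2 - s + (a : ℕ) + (b : ℕ)) f (x u₀) /
            ((r + 2 - s + (a : ℕ) + (b : ℕ)).factorial : ℝ)).det := by
  subst hrs
  have hf' : ContDiff ℝ ∞ f := hf.of_le (by simp)
  have hx' : ContDiff ℝ ∞ x := hx.of_le (by simp)
  set t₀ : ℝ := x u₀ with ht0
  set n : ℕ := r + s with hn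
  -- matrices
  set C : Matrix (Fin n) (Fin n) ℝ :=
    Matrix.of fun i m : Fin n => cbAux f x ((i : ℕ) + 1) ((m : ℕ) + 1) u₀ with hC
  set G : Matrix (Fin n) (Fin n) ℝ :=
    Matrix.of fun m j : Fin n =>
      if (j : ℕ) < r then iteratedDeriv ((m : ℕ) + 1) (fun t : ℝ => t ^ ((j : ℕ) + 1)) t₀
      else iteratedDeriv ((m : ℕ) + 1) (fun t : ℝ => f t * t ^ ((j : ℕ) - r)) t₀ with hG
  set H : Matrix (Fin n) (Fin n) ℝ :=
    Matrix.of fun m p : Fin n =>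
      if (p : ℕ) < r then iteratedDeriv ((m : ℕ) + 1) (fun t : ℝ => (t - t₀) ^ ((p : ℕ) + 1)) t₀
      else iteratedDeriv ((m : ℕ) + 1) (fun t : ℝ => f t * (t - t₀) ^ ((p : ℕ) - r)) t₀ with hH
  set U : Matrix (Fin n) (Fin n) ℝ :=
    Matrix.of fun p j : Fin n =>
      if (j : ℕ) < r then
        (if (p : ℕ) ≤ (j : ℕ) then
          ((((j : ℕ) + 1).choose ((p : ℕ) + 1) : ℕ) : ℝ) * t₀ ^ ((j : ℕ) - (p : ℕ)) else 0)
      else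
        (if r ≤ (p : ℕ) ∧ (p : ℕ) ≤ (j : ℕ) then
          ((((j : ℕ) - r).choose ((p : ℕ) - r) : ℕ) : ℝ) * t₀ ^ ((j : ℕ) - (p : ℕ)) else 0)
    with hU
  set D : Matrix (Fin s) (Fin s) ℝ :=
    Matrix.of fun a b : Fin s =>
      iteratedDeriv (r + (a : ℕ) + 1) (fun t : ℝ => f t * (t - t₀) ^ (b : ℕ)) t₀ with hD
  set E : Matrix (Fin s) (Fin s) ℝ :=
    Matrix.of fun a b : Fin s =>
      iteratedDeriv (r + (a : ℕ) + 1 - (b : ℕ)) f t₀ /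
        ((r + (a : ℕ) + 1 - (b : ℕ)).factorial : ℝ) with hE
  set T : Matrix (Fin s) (Fin s) ℝ :=
    Matrix.of fun a b : Fin s =>
      iteratedDeriv (r + 2 - s + (a : ℕ) + (b : ℕ)) f t₀ /
        ((r + 2 - s + (a : ℕ) + (b : ℕ)).factorial : ℝ) with hT
  -- Step 1 : M = C * G
  have step1 : (Matrix.of fun i j : Fin n =>
        if (j : ℕ) < r then
          iteratedDeriv ((i : ℕ) + 1) (fun u : ℝ => x u ^ ((j : ℕ) + 1)) u₀
        else
          iteratedDeriv ((i : ℕ) + 1) (fun u : ℝ => f (x u) * x u ^ ((j : ℕ) - r)) u₀)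
      = C * G := by
    ext i j
    rw [Matrix.mul_apply]
    have main : ∀ g : ℝ → ℝ, ContDiff ℝ ∞ g →
        iteratedDeriv ((i : ℕ) + 1) (fun v => g (x v)) u₀
          = ∑ m : Fin n, cbAux f x ((i : ℕ) + 1) ((m : ℕ) + 1) u₀
              * iteratedDeriv ((m : ℕ) + 1) g t₀ := by
      intro g hg
      rw [cbAux_chain hf' hx' hxf g hg ((i : ℕ) + 1)]
      show ∑ m ∈ range ((i : ℕ) + 1 + 1), cbAux f x ((i : ℕ) + 1) m u₀ * iteratedDeriv m g t₀
        = _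
      rw [Finset.sum_range_succ'
        (fun m => cbAux f x ((i : ℕ) + 1) m u₀ * iteratedDeriv m g t₀) ((i : ℕ) + 1)]
      rw [cbAux_zero_right f x (i : ℕ)]
      simp only [zero_mul, add_zero]
      rw [show (∑ m : Fin n, cbAux f x ((i : ℕ) + 1) ((m : ℕ) + 1) u₀
            * iteratedDeriv ((m : ℕ) + 1) g t₀)
          = ∑ m ∈ range n, cbAux f x ((i : ℕ) + 1) (m + 1) u₀ * iteratedDeriv (m + 1) g t₀
        from Fin.sum_univ_eq_sum_range
        (fun m => cbAux f x ((i : ℕ) + 1) (m + 1) u₀ * iteratedDeriv (m + 1) g t₀) n]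
      apply Finset.sum_subset (Finset.range_subset_range.mpr (by omega : (i : ℕ) + 1 ≤ n))
      intro m _ hm
      rw [Finset.mem_range, not_lt] at hm
      rw [cbAux_eq_zero f x ((i : ℕ) + 1) (m + 1) (by omega)]
      simp
    by_cases hj : (j : ℕ) < r
    · simp only [Matrix.of_apply, if_pos hj, hC, hG]
      exact main (fun t : ℝ => t ^ ((j : ℕ) + 1)) (by exact contDiff_id.pow _)
    · simp only [Matrix.of_apply, if_neg hj, hC, hG]
      exact main (fun t : ℝ => f t * t ^ ((j : ℕ) - r))
        (by exact hf'.mul (contDiff_id.pow _))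
  -- Step 2 : det C
  have step2 : C.det = (2 * f t₀) ^ (n * (n + 1) / 2) := by
    have htri : C.BlockTriangular OrderDual.toDual := by
      intro i j hij
      have : (i : ℕ) < (j : ℕ) := hij
      show cbAux f x ((i : ℕ) + 1) ((j : ℕ) + 1) u₀ = 0
      rw [cbAux_eq_zero f x _ _ (by omega)]
    rw [Matrix.det_of_lowerTriangular C htri]
    have hdiag : ∀ i : Fin n, C i i = (2 * f t₀) ^ ((i : ℕ) + 1) := by
      intro i
      show cbAux f x ((i : ℕ) + 1) ((i : ℕ) + 1) u₀ = _
      rw [cbAux_diag f x ((i : ℕ) + 1) u₀]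
    rw [Finset.prod_congr rfl (fun i _ => hdiag i), Finset.prod_pow_eq_pow_sum]
    congr 1
    have h := Finset.sum_range_succ' (fun i => i) n
    simp only [add_zero] at h
    rw [Finset.sum_range_id] at h
    rw [Fin.sum_univ_eq_sum_range (fun i => i + 1) n, ← h]
    simp [Nat.mul_comm]
  -- Step 3 : G = H * U
  have step3 : G = H * U := by
    have hphi : ∀ p : Fin n, ContDiff ℝ ∞
        (fun t : ℝ => if (p : ℕ) < r then (t - t₀) ^ ((p : ℕ) + 1)
          else f t * (t - t₀) ^ ((p : ℕ) - r)) := by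
      intro p
      by_cases hp : (p : ℕ) < r
      · simp only [if_pos hp]; exact smooth_sub_pow t₀ _
      · simp only [if_neg hp]; exact hf'.mul (smooth_sub_pow t₀ _)
    ext m j
    rw [Matrix.mul_apply]
    set S : ℝ → ℝ := fun t => ∑ p : Fin n,
      U p j * (if (p : ℕ) < r then (t - t₀) ^ ((p : ℕ) + 1)
        else f t * (t - t₀) ^ ((p : ℕ) - r)) with hSdef
    have hA : iteratedDeriv ((m : ℕ) + 1) S t₀ = ∑ p : Fin n, H m p * U p j := by
      rw [hSdef, iteratedDeriv_fin_sum (fun p => contDiff_const.mul (hphi p)) ((m : ℕ) + 1) t₀]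
      refine Finset.sum_congr rfl fun p _ => ?_
      rw [iteratedDeriv_cmul (hphi p) (U p j) ((m : ℕ) + 1) t₀]
      by_cases hp : (p : ℕ) < r
      · rw [show (fun t : ℝ => if (p : ℕ) < r then (t - t₀) ^ ((p : ℕ) + 1)
            else f t * (t - t₀) ^ ((p : ℕ) - r)) = fun t : ℝ => (t - t₀) ^ ((p : ℕ) + 1)
          from funext fun t => if_pos hp]
        simp only [hH, Matrix.of_apply, if_pos hp]
        ring
      · rw [show (fun t : ℝ => if (p : ℕ) < r then (t - t₀) ^ ((p : ℕ) + 1)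
            else f t * (t - t₀) ^ ((p : ℕ) - r))
            = fun t : ℝ => f t * (t - t₀) ^ ((p : ℕ) - r)
          from funext fun t => if_neg hp]
        simp only [hH, Matrix.of_apply, if_neg hp]
        ring
    by_cases hj : (j : ℕ) < r
    · -- polynomial column
      have hSt : ∀ t : ℝ, S t = ∑ k ∈ range ((j : ℕ) + 1),
          (t - t₀) ^ (k + 1) * t₀ ^ ((j : ℕ) - k) * ((((j : ℕ) + 1).choose (k + 1) : ℕ) : ℝ) := by
        intro t
        simp only [hSdef]
        have hterm : ∀ p : Fin n,
            U p j * (if (p : ℕ) < r then (t - t₀) ^ ((p : ℕ) + 1)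
              else f t * (t - t₀) ^ ((p : ℕ) - r))
            = (fun k : ℕ => if k ≤ (j : ℕ) then
                (t - t₀) ^ (k + 1) * t₀ ^ ((j : ℕ) - k)
                  * ((((j : ℕ) + 1).choose (k + 1) : ℕ) : ℝ) else 0) (p : ℕ) := by
          intro p
          by_cases hp : (p : ℕ) ≤ (j : ℕ)
          · have hpr : (p : ℕ) < r := lt_of_le_of_lt hp hj
            simp only [hU, Matrix.of_apply, if_pos hj, if_pos hp, if_pos hpr]
            ring
          · simp only [hU, Matrix.of_apply, if_pos hj, if_neg hp]
            simp
        rw [Finset.sum_congr rfl (fun p _ => hterm p)]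
        rw [Fin.sum_univ_eq_sum_range (fun k => if k ≤ (j : ℕ) then
          (t - t₀) ^ (k + 1) * t₀ ^ ((j : ℕ) - k)
            * ((((j : ℕ) + 1).choose (k + 1) : ℕ) : ℝ) else 0) n]
        rw [← Finset.sum_subset (Finset.range_subset_range.mpr (by omega : (j : ℕ) + 1 ≤ n))
          (fun k _ hk => if_neg (by rw [Finset.mem_range] at hk; omega))]
        exact Finset.sum_congr rfl fun k hk =>
          if_pos (by rw [Finset.mem_range] at hk; omega)
      have hdec : (fun t : ℝ => t ^ ((j : ℕ) + 1))
          = fun t => S t + t₀ ^ ((j : ℕ) + 1) := by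
        funext t
        have hb := add_pow (t - t₀) t₀ ((j : ℕ) + 1)
        rw [sub_add_cancel] at hb
        rw [hb, hSt t]
        rw [Finset.sum_range_succ' (fun k => (t - t₀) ^ k * t₀ ^ ((j : ℕ) + 1 - k)
          * ((((j : ℕ) + 1).choose k : ℕ) : ℝ)) ((j : ℕ) + 1)]
        simp only [pow_zero, one_mul, Nat.choose_zero_right, Nat.cast_one, mul_one,
          Nat.sub_zero, Nat.succ_sub_succ_eq_sub]
      show G m j = _
      simp only [hG, Matrix.of_apply, if_pos hj]
      rw [hdec, iteratedDeriv_add_const' ((m : ℕ) + 1) (by omega) _ t₀]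
      exact hA
    · -- f-column
      have hrj : r ≤ (j : ℕ) := not_lt.mp hj
      have hSt : ∀ t : ℝ, S t = f t * t ^ ((j : ℕ) - r) := by
        intro t
        simp only [hSdef]
        have hterm : ∀ p : Fin n,
            U p j * (if (p : ℕ) < r then (t - t₀) ^ ((p : ℕ) + 1)
              else f t * (t - t₀) ^ ((p : ℕ) - r))
            = (fun k : ℕ => if r ≤ k ∧ k ≤ (j : ℕ) then
                ((((j : ℕ) - r).choose (k - r) : ℕ) : ℝ) * t₀ ^ ((j : ℕ) - k)
                  * (f t * (t - t₀) ^ (k - r)) else 0) (p : ℕ) := by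
          intro p
          by_cases hp : r ≤ (p : ℕ) ∧ (p : ℕ) ≤ (j : ℕ)
          · have hpr : ¬ ((p : ℕ) < r) := by omega
            simp only [hU, Matrix.of_apply, if_neg hj, if_pos hp, if_neg hpr]
            try ring
          · simp only [hU, Matrix.of_apply, if_neg hj, if_neg hp]
            simp
        rw [Finset.sum_congr rfl (fun p _ => hterm p)]
        rw [Fin.sum_univ_eq_sum_range (fun k => if r ≤ k ∧ k ≤ (j : ℕ) then
          ((((j : ℕ) - r).choose (k - r) : ℕ) : ℝ) * t₀ ^ ((j : ℕ) - k)
            * (f t * (t - t₀) ^ (k - r)) else 0) n]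
        rw [← Finset.sum_subset
          (show Finset.Ico r ((j : ℕ) + 1) ⊆ range n from fun k hk => by
            rw [Finset.mem_Ico] at hk; rw [Finset.mem_range]
            have := j.isLt; omega)
          (fun k _ hk => if_neg (by rw [Finset.mem_Ico] at hk; omega))]
        rw [Finset.sum_congr rfl (fun k hk =>
          if_pos (by rw [Finset.mem_Ico] at hk; omega))]
        rw [Finset.sum_Ico_eq_sum_range
          (fun k => ((((j : ℕ) - r).choose (k - r) : ℕ) : ℝ) * t₀ ^ ((j : ℕ) - k)
            * (f t * (t - t₀) ^ (k - r))) r ((j : ℕ) + 1)]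
        have hb := add_pow (t - t₀) t₀ ((j : ℕ) - r)
        rw [sub_add_cancel] at hb
        rw [hb, Finset.mul_sum]
        rw [show (j : ℕ) + 1 - r = (j : ℕ) - r + 1 from by omega]
        refine Finset.sum_congr rfl fun k hk => ?_
        rw [Finset.mem_range] at hk
        have e1 : r + k - r = k := by omega
        have e2 : (j : ℕ) - (r + k) = (j : ℕ) - r - k := by omega
        rw [e1, e2]
        ring
      show G m j = _
      simp only [hG, Matrix.of_apply, if_neg hj]
      rw [show (fun t : ℝ => f t * t ^ ((j : ℕ) - r)) = S from funext fun t => (hSt t).symm]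
      exact hA
  -- Step 4 : det U = 1
  have step4 : U.det = 1 := by
    have htriU : U.BlockTriangular id := by
      intro p j hpj
      have hv : (j : ℕ) < (p : ℕ) := hpj
      by_cases hj : (j : ℕ) < r
      · simp only [hU, Matrix.of_apply, if_pos hj, if_neg (by omega : ¬ ((p : ℕ) ≤ (j : ℕ)))]
      · simp only [hU, Matrix.of_apply, if_neg hj,
          if_neg (by omega : ¬ (r ≤ (p : ℕ) ∧ (p : ℕ) ≤ (j : ℕ)))]
    rw [Matrix.det_of_upperTriangular htriU]
    refine Finset.prod_eq_one fun j _ => ?_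
    by_cases hj : (j : ℕ) < r
    · simp only [hU, Matrix.of_apply, if_pos hj, if_pos (le_refl (j : ℕ)), Nat.choose_self,
        Nat.cast_one, Nat.sub_self, pow_zero, mul_one]
    · simp only [hU, Matrix.of_apply, if_neg hj,
        if_pos (⟨not_lt.mp hj, le_refl (j : ℕ)⟩ : r ≤ (j : ℕ) ∧ (j : ℕ) ≤ (j : ℕ)),
        Nat.choose_self, Nat.cast_one, Nat.sub_self, pow_zero, mul_one]
  -- Step 5 : det H
  have step5 : H.det = (∏ j : Fin r, (((j : ℕ) + 1).factorial : ℝ)) * D.det := by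
    rw [show H.det = (H.submatrix (finSumFinEquiv (m := r) (n := s))
        (finSumFinEquiv (m := r) (n := s))).det
      from (Matrix.det_submatrix_equiv_self finSumFinEquiv H).symm]
    have hblocks : H.submatrix finSumFinEquiv finSumFinEquiv =
        Matrix.fromBlocks (Matrix.diagonal fun j : Fin r => (((j : ℕ) + 1).factorial : ℝ))
          (Matrix.of fun (i : Fin r) (b : Fin s) =>
            H (finSumFinEquiv (Sum.inl i)) (finSumFinEquiv (Sum.inr b))) 0 D := by
      ext iv jv
      cases iv with
      | inl i =>
        cases jv with
        | inl p =>
          simp only [Matrix.submatrix_apply, finSumFinEquiv_apply_left,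
            Matrix.fromBlocks_apply₁₁, hH, Matrix.of_apply, Fin.coe_castAdd]
          rw [if_pos p.isLt, iteratedDeriv_sub_pow_self']
          rcases eq_or_ne i p with rfl | hne
          · rw [if_pos rfl, Matrix.diagonal_apply_eq]
          · rw [if_neg (fun h => hne (Fin.ext (by omega))),
              Matrix.diagonal_apply_ne _ hne]
        | inr b => rfl
      | inr a =>
        cases jv with
        | inl p =>
          simp only [Matrix.submatrix_apply, finSumFinEquiv_apply_left,
            finSumFinEquiv_apply_right, Matrix.fromBlocks_apply₂₁, hH, Matrix.of_apply,
            Fin.coe_castAdd, Fin.coe_natAdd, Matrix.zero_apply]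
          rw [if_pos p.isLt, iteratedDeriv_sub_pow_self',
            if_neg (by have := p.isLt; omega)]
        | inr b =>
          simp only [Matrix.submatrix_apply, finSumFinEquiv_apply_right,
            Matrix.fromBlocks_apply₂₂, hH, hD, Matrix.of_apply, Fin.coe_natAdd]
          rw [if_neg (by omega), show r + (b : ℕ) - r = (b : ℕ) from by omega]
    rw [hblocks, Matrix.det_fromBlocks_zero₂₁, Matrix.det_diagonal]
  -- Step 6 : det D
  have step6 : D.det = (∏ a : Fin s, ((r + (a : ℕ) + 1).factorial : ℝ)) * E.det := by
    have hDE : D = Matrix.of fun a b : Fin s =>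
        ((r + (a : ℕ) + 1).factorial : ℝ) * E a b := by
      ext a b
      have hb : (b : ℕ) ≤ r + (a : ℕ) + 1 := by have := b.isLt; omega
      show iteratedDeriv (r + (a : ℕ) + 1) (fun t => f t * (t - t₀) ^ (b : ℕ)) t₀ = _
      rw [iteratedDeriv_mul_pow_self hf' t₀ (b : ℕ) (r + (a : ℕ) + 1) hb]
      show _ = ((r + (a : ℕ) + 1).factorial : ℝ) *
        (iteratedDeriv (r + (a : ℕ) + 1 - (b : ℕ)) f t₀ /
          ((r + (a : ℕ) + 1 - (b : ℕ)).factorial : ℝ))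
      have key : ((r + (a : ℕ) + 1).factorial : ℝ)
          = ((r + (a : ℕ) + 1).choose (b : ℕ) : ℝ) * ((b : ℕ).factorial : ℝ)
            * ((r + (a : ℕ) + 1 - (b : ℕ)).factorial : ℝ) := by
        exact_mod_cast congrArg (Nat.cast (R := ℝ))
          (Nat.choose_mul_factorial_mul_factorial hb).symm
      rw [key]
      have h0 : ((r + (a : ℕ) + 1 - (b : ℕ)).factorial : ℝ) ≠ 0 :=
        Nat.cast_ne_zero.mpr (Nat.factorial_ne_zero _)
      field_simp
    rw [hDE, Matrix.det_mul_column (fun a : Fin s => ((r + (a : ℕ) + 1).factorial : ℝ)) E]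
  -- Step 7 : det E
  have step7 : E.det = (-1 : ℝ) ^ (s * (s - 1) / 2) * T.det := by
    have hET : E = T.submatrix id Fin.revPerm := by
      ext a b
      simp only [Matrix.submatrix_apply, id_eq, Fin.revPerm_apply, hE, hT, Matrix.of_apply]
      have hidx : r + 2 - s + (a : ℕ) + ((Fin.rev b : Fin s) : ℕ)
          = r + (a : ℕ) + 1 - (b : ℕ) := by
        rw [Fin.val_rev]
        have := b.isLt
        omega
      rw [hidx]
    rw [hET, Matrix.det_permute' Fin.revPerm T, sign_revPerm' s]
    norm_num
  -- products of factorials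
  have hprod : (∏ j : Fin r, (((j : ℕ) + 1).factorial : ℝ))
      * (∏ a : Fin s, ((r + (a : ℕ) + 1).factorial : ℝ))
      = ∏ k ∈ Finset.range n, ((k + 1).factorial : ℝ) := by
    rw [Fin.prod_univ_eq_prod_range (fun j => ((j + 1).factorial : ℝ)) r,
      Fin.prod_univ_eq_prod_range (fun a => ((r + a + 1).factorial : ℝ)) s, hn,
      Finset.prod_range_add (fun k => ((k + 1).factorial : ℝ)) r s]
  rw [step1, Matrix.det_mul, step2, step3, Matrix.det_mul, step4, step5, step6, step7,
    ← hprod]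
  ring
end
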